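/- Let U ⊆ ℍ be an axially symmetric open set and let g : U → ℍ be left slice hyperholomorphic with defining pair (α, β) twice continuously differentiable; assume g is twice real-differentiable on U. Then for every q ∈ U (note q̄ ∈ U by axial symmetry): (i) Δ(x ↦ x·g(x))(q) = q·Δg(q) + 2·Dg(q); (ii) D(x ↦ x·g(x))(q) = q̄·Dg(q) − 2·g(q) and also D(x ↦ x·g(x))(q) = q·Dg(q) − 2·g(q̄); (iii) D̄(x ↦ x·g(x))(q) = 4·g(q) + 2·q·∂_{q₀}g(q) − q̄·Dg(q) and also D̄(x ↦ x·g(x))(q) = 2·g(q) + 2·g(q̄) + q·D̄g(q). -/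

import Mathlib

noncomputable section
open Quaternion

/-- The imaginary units of `ℍ`. -/
def e1 : ℍ[ℝ] := ⟨0, 1, 0, 0⟩
def e2 : ℍ[ℝ] := ⟨0, 0, 1, 0⟩
def e3 : ℍ[ℝ] := ⟨0, 0, 0, 1⟩

@[simp] lemma e1_re : e1.re = 0 := rfl
@[simp] lemma e1_imI : e1.imI = 1 := rfl
@[simp] lemma e1_imJ : e1.imJ = 0 := rfl
@[simp] lemma e1_imK : e1.imK = 0 := rfl
@[simp] lemma e2_re : e2.re = 0 := rfl
@[simp] lemma e2_imI : e2.imI = 0 := rfl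
@[simp] lemma e2_imJ : e2.imJ = 1 := rfl
@[simp] lemma e2_imK : e2.imK = 0 := rfl
@[simp] lemma e3_re : e3.re = 0 := rfl
@[simp] lemma e3_imI : e3.imI = 0 := rfl
@[simp] lemma e3_imJ : e3.imJ = 0 := rfl
@[simp] lemma e3_imK : e3.imK = 1 := rfl

set_option maxHeartbeats 4000000 in
lemma quatAlg (q m : ℍ[ℝ]) (r n : ℝ) (A B Au Bu gq gqs a b1 b2 b3 : ℍ[ℝ])
    (hrn : r * n = 1)
    (hr2 : q.imI^2 + q.imJ^2 + q.imK^2 = r^2)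
    (hm : m = ⟨0, q.imI, q.imJ, q.imK⟩)
    (hgq : gq = A + n • (m * B))
    (hgqs : gqs = A - n • (m * B))
    (ha : a = Au + n • (m * Bu))
    (hb1 : b1 = (q.imI * n) • (-Bu) + (-(q.imI * n^3)) • (m * B) + n • (e1 * B)
      + n • (m * ((q.imI * n) • Au)))
    (hb2 : b2 = (q.imJ * n) • (-Bu) + (-(q.imJ * n^3)) • (m * B) + n • (e2 * B)
      + n • (m * ((q.imJ * n) • Au)))
    (hb3 : b3 = (q.imK * n) • (-Bu) + (-(q.imK * n^3)) • (m * B) + n • (e3 * B)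
      + n • (m * ((q.imK * n) • Au))) :
    ((1 * gq + q * a) + e1 * (e1 * gq + q * b1) + e2 * (e2 * gq + q * b2)
        + e3 * (e3 * gq + q * b3) = star q * (a + e1 * b1 + e2 * b2 + e3 * b3) - (2:ℝ) • gq) ∧
    ((1 * gq + q * a) + e1 * (e1 * gq + q * b1) + e2 * (e2 * gq + q * b2)
        + e3 * (e3 * gq + q * b3) = q * (a + e1 * b1 + e2 * b2 + e3 * b3) - (2:ℝ) • gqs) ∧
    ((1 * gq + q * a) - e1 * (e1 * gq + q * b1) - e2 * (e2 * gq + q * b2)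
        - e3 * (e3 * gq + q * b3)
      = (4:ℝ) • gq + (2:ℝ) • (q * a) - star q * (a + e1 * b1 + e2 * b2 + e3 * b3)) ∧
    ((1 * gq + q * a) - e1 * (e1 * gq + q * b1) - e2 * (e2 * gq + q * b2)
        - e3 * (e3 * gq + q * b3)
      = (2:ℝ) • gq + (2:ℝ) • gqs + q * (a - e1 * b1 - e2 * b2 - e3 * b3)) := by
  obtain ⟨hm0, hm1, hm2, hm3⟩ : m.re = 0 ∧ m.imI = q.imI ∧ m.imJ = q.imJ ∧ m.imK = q.imK := by
    subst hm; exact ⟨rfl, rfl, rfl, rfl⟩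
  subst hgq hgqs ha hb1 hb2 hb3
  refine ⟨?_, ?_, ?_, ?_⟩ <;> ext <;>
    simp only [Quaternion.re_add, Quaternion.imI_add, Quaternion.imJ_add, Quaternion.imK_add,
      Quaternion.re_sub, Quaternion.imI_sub, Quaternion.imJ_sub, Quaternion.imK_sub,
      Quaternion.re_neg, Quaternion.imI_neg, Quaternion.imJ_neg, Quaternion.imK_neg,
      Quaternion.re_mul, Quaternion.imI_mul, Quaternion.imJ_mul, Quaternion.imK_mul,
      Quaternion.re_smul, Quaternion.imI_smul, Quaternion.imJ_smul, Quaternion.imK_smul,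
      Quaternion.re_star, Quaternion.imI_star, Quaternion.imJ_star, Quaternion.imK_star,
      Quaternion.re_one, Quaternion.imI_one, Quaternion.imJ_one, Quaternion.imK_one,
      e1_re, e1_imI, e1_imJ, e1_imK, e2_re, e2_imI, e2_imJ, e2_imK,
      e3_re, e3_imI, e3_imJ, e3_imK, smul_eq_mul, hm0, hm1, hm2, hm3]
  · linear_combination (norm := ring) ((2)*q.imK*n^2*Au.imK + (-2)*q.imK*n^3*B.imK + (2)*q.imJ*n^2*Au.imJ + (-2)*q.imJ*n^3*B.imJ + (2)*q.imI*n^2*Au.imI + (-2)*q.imI*n^3*B.imI) * hr2 + ((2)*q.imK*Au.imK + (-2)*q.imK*n*B.imK + (2)*q.imK*r*n*Au.imK + (-2)*q.imK*r*n^2*B.imK + (2)*q.imJ*Au.imJ + (-2)*q.imJ*n*B.imJ + (2)*q.imJ*r*n*Au.imJ + (-2)*q.imJ*r*n^2*B.imJ + (2)*q.imI*Au.imI + (-2)*q.imI*n*B.imI + (2)*q.imI*r*n*Au.imI + (-2)*q.imI*r*n^2*B.imI) * hrn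
  · linear_combination (norm := ring) ((2)*q.imK*n^2*Au.imJ + (-2)*q.imK*n^3*B.imJ + (-2)*q.imJ*n^2*Au.imK + (2)*q.imJ*n^3*B.imK + (-2)*q.imI*n^2*Au.re + (2)*q.imI*n^3*B.re) * hr2 + ((2)*q.imK*Au.imJ + (-2)*q.imK*n*B.imJ + (2)*q.imK*r*n*Au.imJ + (-2)*q.imK*r*n^2*B.imJ + (-2)*q.imJ*Au.imK + (2)*q.imJ*n*B.imK + (-2)*q.imJ*r*n*Au.imK + (2)*q.imJ*r*n^2*B.imK + (-2)*q.imI*Au.re + (2)*q.imI*n*B.re + (-2)*q.imI*r*n*Au.re + (2)*q.imI*r*n^2*B.re) * hrn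
  · linear_combination (norm := ring) ((-2)*q.imK*n^2*Au.imI + (2)*q.imK*n^3*B.imI + (-2)*q.imJ*n^2*Au.re + (2)*q.imJ*n^3*B.re + (2)*q.imI*n^2*Au.imK + (-2)*q.imI*n^3*B.imK) * hr2 + ((-2)*q.imK*Au.imI + (2)*q.imK*n*B.imI + (-2)*q.imK*r*n*Au.imI + (2)*q.imK*r*n^2*B.imI + (-2)*q.imJ*Au.re + (2)*q.imJ*n*B.re + (-2)*q.imJ*r*n*Au.re + (2)*q.imJ*r*n^2*B.re + (2)*q.imI*Au.imK + (-2)*q.imI*n*B.imK + (2)*q.imI*r*n*Au.imK + (-2)*q.imI*r*n^2*B.imK) * hrn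
  · linear_combination (norm := ring) ((-2)*q.imK*n^2*Au.re + (2)*q.imK*n^3*B.re + (2)*q.imJ*n^2*Au.imI + (-2)*q.imJ*n^3*B.imI + (-2)*q.imI*n^2*Au.imJ + (2)*q.imI*n^3*B.imJ) * hr2 + ((-2)*q.imK*Au.re + (2)*q.imK*n*B.re + (-2)*q.imK*r*n*Au.re + (2)*q.imK*r*n^2*B.re + (2)*q.imJ*Au.imI + (-2)*q.imJ*n*B.imI + (2)*q.imJ*r*n*Au.imI + (-2)*q.imJ*r*n^2*B.imI + (-2)*q.imI*Au.imJ + (2)*q.imI*n*B.imJ + (-2)*q.imI*r*n*Au.imJ + (2)*q.imI*r*n^2*B.imJ) * hrn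
  · ring
  · ring
  · ring
  · ring
  · linear_combination (norm := ring) ((-2)*q.imK*n^2*Au.imK + (2)*q.imK*n^3*B.imK + (-2)*q.imJ*n^2*Au.imJ + (2)*q.imJ*n^3*B.imJ + (-2)*q.imI*n^2*Au.imI + (2)*q.imI*n^3*B.imI) * hr2 + ((-2)*q.imK*Au.imK + (2)*q.imK*n*B.imK + (-2)*q.imK*r*n*Au.imK + (2)*q.imK*r*n^2*B.imK + (-2)*q.imJ*Au.imJ + (2)*q.imJ*n*B.imJ + (-2)*q.imJ*r*n*Au.imJ + (2)*q.imJ*r*n^2*B.imJ + (-2)*q.imI*Au.imI + (2)*q.imI*n*B.imI + (-2)*q.imI*r*n*Au.imI + (2)*q.imI*r*n^2*B.imI) * hrn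
  · linear_combination (norm := ring) ((-2)*q.imK*n^2*Au.imJ + (2)*q.imK*n^3*B.imJ + (2)*q.imJ*n^2*Au.imK + (-2)*q.imJ*n^3*B.imK + (2)*q.imI*n^2*Au.re + (-2)*q.imI*n^3*B.re) * hr2 + ((-2)*q.imK*Au.imJ + (2)*q.imK*n*B.imJ + (-2)*q.imK*r*n*Au.imJ + (2)*q.imK*r*n^2*B.imJ + (2)*q.imJ*Au.imK + (-2)*q.imJ*n*B.imK + (2)*q.imJ*r*n*Au.imK + (-2)*q.imJ*r*n^2*B.imK + (2)*q.imI*Au.re + (-2)*q.imI*n*B.re + (2)*q.imI*r*n*Au.re + (-2)*q.imI*r*n^2*B.re) * hrn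
  · linear_combination (norm := ring) ((2)*q.imK*n^2*Au.imI + (-2)*q.imK*n^3*B.imI + (2)*q.imJ*n^2*Au.re + (-2)*q.imJ*n^3*B.re + (-2)*q.imI*n^2*Au.imK + (2)*q.imI*n^3*B.imK) * hr2 + ((2)*q.imK*Au.imI + (-2)*q.imK*n*B.imI + (2)*q.imK*r*n*Au.imI + (-2)*q.imK*r*n^2*B.imI + (2)*q.imJ*Au.re + (-2)*q.imJ*n*B.re + (2)*q.imJ*r*n*Au.re + (-2)*q.imJ*r*n^2*B.re + (-2)*q.imI*Au.imK + (2)*q.imI*n*B.imK + (-2)*q.imI*r*n*Au.imK + (2)*q.imI*r*n^2*B.imK) * hrn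
  · linear_combination (norm := ring) ((2)*q.imK*n^2*Au.re + (-2)*q.imK*n^3*B.re + (-2)*q.imJ*n^2*Au.imI + (2)*q.imJ*n^3*B.imI + (2)*q.imI*n^2*Au.imJ + (-2)*q.imI*n^3*B.imJ) * hr2 + ((2)*q.imK*Au.re + (-2)*q.imK*n*B.re + (2)*q.imK*r*n*Au.re + (-2)*q.imK*r*n^2*B.re + (-2)*q.imJ*Au.imI + (2)*q.imJ*n*B.imI + (-2)*q.imJ*r*n*Au.imI + (2)*q.imJ*r*n^2*B.imI + (2)*q.imI*Au.imJ + (-2)*q.imI*n*B.imJ + (2)*q.imI*r*n*Au.imJ + (-2)*q.imI*r*n^2*B.imJ) * hrn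
  · ring
  · ring
  · ring
  · ring


set_option maxHeartbeats 1000000 in
lemma slice_deriv (U : Set ℍ[ℝ]) (hUo : IsOpen U)
    (g : ℍ[ℝ] → ℍ[ℝ]) (α β : ℝ × ℝ → ℍ[ℝ])
    (hα : ContDiff ℝ 1 α) (hβ : ContDiff ℝ 1 β)
    (hrep : ∀ x ∈ U, x.im ≠ 0 →
      g x = α (x.re, ‖x.im‖) + ‖x.im‖⁻¹ • (x.im * β (x.re, ‖x.im‖)))
    (q : ℍ[ℝ]) (hq : q ∈ U) (him : q.im ≠ 0)
    (hgq : DifferentiableAt ℝ g q) (v : ℍ[ℝ]) :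
    fderiv ℝ g q v =
      v.re • fderiv ℝ α (q.re, ‖q.im‖) (1,0)
      + ((q.imI*v.imI + q.imJ*v.imJ + q.imK*v.imK) * ‖q.im‖⁻¹) •
          fderiv ℝ α (q.re, ‖q.im‖) (0,1)
      + (-((q.imI*v.imI + q.imJ*v.imJ + q.imK*v.imK) * ‖q.im‖⁻¹ / ‖q.im‖^2)) •
          (q.im * β (q.re, ‖q.im‖))
      + ‖q.im‖⁻¹ • (v.im * β (q.re, ‖q.im‖))
      + ‖q.im‖⁻¹ • (q.im * (v.re • fderiv ℝ β (q.re, ‖q.im‖) (1,0)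
          + ((q.imI*v.imI + q.imJ*v.imJ + q.imK*v.imK) * ‖q.im‖⁻¹) •
              fderiv ℝ β (q.re, ‖q.im‖) (0,1))) := by
  set r : ℝ := ‖q.im‖ with hrdef
  have hr0 : r ≠ 0 := norm_ne_zero_iff.2 him
  set d : ℝ := q.imI*v.imI + q.imJ*v.imJ + q.imK*v.imK with hddef
  have hnorm : ∀ x : ℍ[ℝ], ‖x‖ = Real.sqrt (normSq x) := fun x => by
    rw [Quaternion.normSq_eq_norm_mul_self, Real.sqrt_mul_self (norm_nonneg x)]
  set s : ℝ → ℝ := fun t => (q.imI + t*v.imI)^2 + (q.imJ + t*v.imJ)^2 + (q.imK + t*v.imK)^2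
    with hsdef
  have hs0 : s 0 = r^2 := by
    have : r^2 = normSq q.im := by
      rw [hrdef, sq, ← Quaternion.normSq_eq_norm_mul_self]
    rw [this, Quaternion.normSq_def']
    simp [hsdef]
  have hnormim : ∀ t : ℝ, ‖(q + t • v).im‖ = Real.sqrt (s t) := by
    intro t
    rw [hnorm, Quaternion.normSq_def']
    simp [hsdef]
  -- derivative of s
  have h1 : HasDerivAt (fun t : ℝ => q.imI + t * v.imI) v.imI 0 := by
    simpa using ((hasDerivAt_id (0:ℝ)).mul_const v.imI).const_add q.imI
  have h2 : HasDerivAt (fun t : ℝ => q.imJ + t * v.imJ) v.imJ 0 := by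
    simpa using ((hasDerivAt_id (0:ℝ)).mul_const v.imJ).const_add q.imJ
  have h3 : HasDerivAt (fun t : ℝ => q.imK + t * v.imK) v.imK 0 := by
    simpa using ((hasDerivAt_id (0:ℝ)).mul_const v.imK).const_add q.imK
  have hs : HasDerivAt s (2*d) 0 := by
    have := ((h1.pow 2).add (h2.pow 2)).add (h3.pow 2)
    exact this.congr_deriv (by rw [hddef]; push_cast; ring)
  have hsqrt0 : Real.sqrt (s 0) = r := by
    rw [hs0]; exact Real.sqrt_sq (norm_nonneg _)
  have hρ : HasDerivAt (fun t => Real.sqrt (s t)) (d * r⁻¹) 0 := by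
    have := hs.sqrt (by rw [hs0]; positivity)
    rw [hsqrt0] at this
    convert this using 1
    field_simp
  -- curve and composition
  have hc : HasDerivAt (fun t : ℝ => q + t • v) v 0 := by
    simpa using ((hasDerivAt_id (0:ℝ)).smul_const v).const_add q
  have hgc : HasDerivAt (fun t : ℝ => g (q + t • v)) (fderiv ℝ g q v) 0 := by
    have hfd : HasFDerivAt g (fderiv ℝ g q) ((fun t : ℝ => q + t • v) 0) := by
      simpa using hgq.hasFDerivAt
    exact hfd.comp_hasDerivAt 0 hc
  -- curve in ℝ × ℝ
  have h0 : HasDerivAt (fun t : ℝ => q.re + t * v.re) v.re 0 := by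
    simpa using ((hasDerivAt_id (0:ℝ)).mul_const v.re).const_add q.re
  have hp : HasDerivAt (fun t : ℝ => (q.re + t * v.re, Real.sqrt (s t)))
      (v.re, d * r⁻¹) 0 := h0.prodMk hρ
  have hp0 : (q.re + (0:ℝ) * v.re, Real.sqrt (s 0)) = (q.re, r) := by
    rw [hsqrt0]; simp
  have hA : HasDerivAt (fun t : ℝ => α (q.re + t * v.re, Real.sqrt (s t)))
      (fderiv ℝ α (q.re, r) (v.re, d * r⁻¹)) 0 := by
    have hfd : HasFDerivAt α (fderiv ℝ α (q.re, r))
        ((fun t : ℝ => (q.re + t * v.re, Real.sqrt (s t))) 0) := by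
      rw [show ((fun t : ℝ => (q.re + t * v.re, Real.sqrt (s t))) 0) = (q.re, r) from hp0]
      exact ((hα.differentiable one_ne_zero) (q.re, r)).hasFDerivAt
    exact hfd.comp_hasDerivAt 0 hp
  have hB : HasDerivAt (fun t : ℝ => β (q.re + t * v.re, Real.sqrt (s t)))
      (fderiv ℝ β (q.re, r) (v.re, d * r⁻¹)) 0 := by
    have hfd : HasFDerivAt β (fderiv ℝ β (q.re, r))
        ((fun t : ℝ => (q.re + t * v.re, Real.sqrt (s t))) 0) := by
      rw [show ((fun t : ℝ => (q.re + t * v.re, Real.sqrt (s t))) 0) = (q.re, r) from hp0]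
      exact ((hβ.differentiable one_ne_zero) (q.re, r)).hasFDerivAt
    exact hfd.comp_hasDerivAt 0 hp
  have hmim : HasDerivAt (fun t : ℝ => q.im + t • v.im) v.im 0 := by
    simpa using ((hasDerivAt_id (0:ℝ)).smul_const v.im).const_add q.im
  have hmul : HasDerivAt
      (fun t : ℝ => (q.im + t • v.im) * β (q.re + t * v.re, Real.sqrt (s t)))
      (v.im * β (q.re, r) + q.im * fderiv ℝ β (q.re, r) (v.re, d * r⁻¹)) 0 := by
    have := hmim.mul hB
    simpa [hsqrt0, Pi.mul_def] using this
  have hinv : HasDerivAt (fun t : ℝ => (Real.sqrt (s t))⁻¹) (-(d * r⁻¹) / r^2) 0 := by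
    have := hρ.inv (by rw [hsqrt0]; exact hr0)
    rwa [hsqrt0] at this
  have htot : HasDerivAt
      (fun t : ℝ => α (q.re + t * v.re, Real.sqrt (s t))
        + (Real.sqrt (s t))⁻¹ • ((q.im + t • v.im) * β (q.re + t * v.re, Real.sqrt (s t))))
      (fderiv ℝ α (q.re, r) (v.re, d * r⁻¹)
        + (r⁻¹ • (v.im * β (q.re, r) + q.im * fderiv ℝ β (q.re, r) (v.re, d * r⁻¹))
          + (-(d * r⁻¹) / r^2) • (q.im * β (q.re, r)))) 0 := by
    have := hA.add (hinv.smul hmul)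
    simpa [hsqrt0, Pi.add_def, Pi.smul_def'] using this
  -- g agrees with the slice representation near 0
  have heq : (fun t : ℝ => g (q + t • v)) =ᶠ[nhds (0:ℝ)]
      (fun t : ℝ => α (q.re + t * v.re, Real.sqrt (s t))
        + (Real.sqrt (s t))⁻¹ • ((q.im + t • v.im) * β (q.re + t * v.re, Real.sqrt (s t)))) := by
    have hW : IsOpen {x : ℍ[ℝ] | x ∈ U ∧ x.im ≠ 0} := by
      have heqset : {x : ℍ[ℝ] | x ∈ U ∧ x.im ≠ 0}
          = U ∩ ((fun x : ℍ[ℝ] => x.im) ⁻¹' {(0:ℍ[ℝ])}ᶜ) := rfl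
      rw [heqset]
      exact hUo.inter (isOpen_compl_singleton.preimage Quaternion.continuous_im)
    have hcont : Continuous (fun t : ℝ => q + t • v) :=
      continuous_const.add (continuous_id.smul continuous_const)
    have hmem : ∀ᶠ t in nhds (0:ℝ), (q + t • v) ∈ {x : ℍ[ℝ] | x ∈ U ∧ x.im ≠ 0} := by
      apply hcont.continuousAt.preimage_mem_nhds
      rw [show q + (0:ℝ) • v = q by simp]
      exact hW.mem_nhds ⟨hq, him⟩
    filter_upwards [hmem] with t ht
    rw [hrep _ ht.1 ht.2]
    have hre : (q + t • v).re = q.re + t * v.re := by simp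
    have him' : (q + t • v).im = q.im + t • v.im := by simp
    rw [hnormim t, hre, him']
  have huniq : fderiv ℝ g q v =
      fderiv ℝ α (q.re, r) (v.re, d * r⁻¹)
        + (r⁻¹ • (v.im * β (q.re, r) + q.im * fderiv ℝ β (q.re, r) (v.re, d * r⁻¹))
          + (-(d * r⁻¹) / r^2) • (q.im * β (q.re, r))) :=
    hgc.unique (htot.congr_of_eventuallyEq heq)
  rw [huniq]
  have hsplit : ∀ γ : ℝ × ℝ → ℍ[ℝ], ContDiff ℝ 1 γ →
      fderiv ℝ γ (q.re, r) (v.re, d * r⁻¹)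
        = v.re • fderiv ℝ γ (q.re, r) (1,0) + (d * r⁻¹) • fderiv ℝ γ (q.re, r) (0,1) := by
    intro γ hγ
    have : (v.re, d * r⁻¹) = v.re • ((1:ℝ),(0:ℝ)) + (d * r⁻¹) • ((0:ℝ),(1:ℝ)) := by
      simp [Prod.ext_iff]
    rw [this, map_add, map_smul, map_smul]
  rw [hsplit α hα, hsplit β hβ]
  simp only [mul_add, mul_smul_comm, smul_add, smul_smul]
  match_scalars <;> field_simp <;> ring


@[simp] lemma e1_im : e1.im = e1 := by ext <;> simp
@[simp] lemma e2_im : e2.im = e2 := by ext <;> simp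
@[simp] lemma e3_im : e3.im = e3 := by ext <;> simp

lemma quatAlgReal (q gq a b1 b2 b3 : ℍ[ℝ])
    (hi : q.imI = 0) (hj : q.imJ = 0) (hk : q.imK = 0) :
    ((1 * gq + q * a) + e1 * (e1 * gq + q * b1) + e2 * (e2 * gq + q * b2)
        + e3 * (e3 * gq + q * b3) = q * (a + e1 * b1 + e2 * b2 + e3 * b3) - (2:ℝ) • gq) ∧
    ((1 * gq + q * a) - e1 * (e1 * gq + q * b1) - e2 * (e2 * gq + q * b2)
        - e3 * (e3 * gq + q * b3)
      = (4:ℝ) • gq + (2:ℝ) • (q * a) - q * (a + e1 * b1 + e2 * b2 + e3 * b3)) ∧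
    ((1 * gq + q * a) - e1 * (e1 * gq + q * b1) - e2 * (e2 * gq + q * b2)
        - e3 * (e3 * gq + q * b3)
      = (2:ℝ) • gq + (2:ℝ) • gq + q * (a - e1 * b1 - e2 * b2 - e3 * b3)) := by
  refine ⟨?_, ?_, ?_⟩ <;> ext <;>
    simp only [Quaternion.re_add, Quaternion.imI_add, Quaternion.imJ_add, Quaternion.imK_add,
      Quaternion.re_sub, Quaternion.imI_sub, Quaternion.imJ_sub, Quaternion.imK_sub,
      Quaternion.re_neg, Quaternion.imI_neg, Quaternion.imJ_neg, Quaternion.imK_neg,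
      Quaternion.re_mul, Quaternion.imI_mul, Quaternion.imJ_mul, Quaternion.imK_mul,
      Quaternion.re_smul, Quaternion.imI_smul, Quaternion.imJ_smul, Quaternion.imK_smul,
      Quaternion.re_one, Quaternion.imI_one, Quaternion.imJ_one, Quaternion.imK_one,
      e1_re, e1_imI, e1_imJ, e1_imK, e2_re, e2_imI, e2_imJ, e2_imK,
      e3_re, e3_imI, e3_imJ, e3_imK, smul_eq_mul, hi, hj, hk] <;> ring

lemma fderiv_id_mul (g : ℍ[ℝ] → ℍ[ℝ]) (q : ℍ[ℝ]) (hg : DifferentiableAt ℝ g q)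
    (v : ℍ[ℝ]) :
    fderiv ℝ (fun x => x * g x) q v = v * g q + q * fderiv ℝ g q v := by
  have h : HasFDerivAt (fun x => x * g x)
      (q • fderiv ℝ g q + (ContinuousLinearMap.id ℝ ℍ[ℝ]).smulRight (g q)) q :=
    (hasFDerivAt_id q).mul' hg.hasFDerivAt
  rw [h.fderiv]
  simp [smul_eq_mul, add_comm]

/-- The Cauchy–Fueter operator `Df = ∂₀f + e₁∂₁f + e₂∂₂f + e₃∂₃f`. -/
def CF (f : ℍ[ℝ] → ℍ[ℝ]) (q : ℍ[ℝ]) : ℍ[ℝ] :=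
  fderiv ℝ f q 1 + e1 * fderiv ℝ f q e1 + e2 * fderiv ℝ f q e2 + e3 * fderiv ℝ f q e3

/-- The conjugate Cauchy–Fueter operator `D̄f = ∂₀f − e₁∂₁f − e₂∂₂f − e₃∂₃f`. -/
def CFbar (f : ℍ[ℝ] → ℍ[ℝ]) (q : ℍ[ℝ]) : ℍ[ℝ] :=
  fderiv ℝ f q 1 - e1 * fderiv ℝ f q e1 - e2 * fderiv ℝ f q e2 - e3 * fderiv ℝ f q e3

/-- The Laplacian `Δf = ∂₀²f + ∂₁²f + ∂₂²f + ∂₃²f` on `ℍ ≅ ℝ⁴`. -/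
def Lap (f : ℍ[ℝ] → ℍ[ℝ]) (q : ℍ[ℝ]) : ℍ[ℝ] :=
  fderiv ℝ (fun x => fderiv ℝ f x 1) q 1 + fderiv ℝ (fun x => fderiv ℝ f x e1) q e1 +
    fderiv ℝ (fun x => fderiv ℝ f x e2) q e2 + fderiv ℝ (fun x => fderiv ℝ f x e3) q e3

/-- `U ⊆ ℍ` is axially symmetric. -/
def AxiallySymmetric (U : Set ℍ[ℝ]) : Prop :=
  ∀ (u v : ℝ) (I J : ℍ[ℝ]), I.re = 0 → ‖I‖ = 1 → J.re = 0 → ‖J‖ = 1 →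
    (u : ℍ[ℝ]) + v • I ∈ U → (u : ℍ[ℝ]) + v • J ∈ U

/-- `f` is left slice hyperholomorphic on `U` with defining pair `(α, β)`. -/
structure IsSliceHyperholomorphic (U : Set ℍ[ℝ]) (f : ℍ[ℝ] → ℍ[ℝ])
    (α β : ℝ × ℝ → ℍ[ℝ]) : Prop where
  contDiff_α : ContDiff ℝ 1 α
  contDiff_β : ContDiff ℝ 1 β
  even_α : ∀ u v : ℝ, α (u, -v) = α (u, v)
  odd_β : ∀ u v : ℝ, β (u, -v) = -β (u, v)
  CR₁ : ∀ u v : ℝ, fderiv ℝ α (u, v) (1, 0) - fderiv ℝ β (u, v) (0, 1) = 0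
  CR₂ : ∀ u v : ℝ, fderiv ℝ α (u, v) (0, 1) + fderiv ℝ β (u, v) (1, 0) = 0
  rep : ∀ (u v : ℝ) (I : ℍ[ℝ]), I.re = 0 → ‖I‖ = 1 →
    (u : ℍ[ℝ]) + v • I ∈ U → f ((u : ℍ[ℝ]) + v • I) = α (u, v) + I * β (u, v)

set_option maxHeartbeats 3000000 in
/-- Leibniz-type formulas for `Δ`, `D` and `D̄` applied to `q·g(q)` for a slice
hyperholomorphic `g`. -/
theorem leibniz_formulas_for_fine_structure_operators (U : Set ℍ[ℝ])
    (hUo : IsOpen U) (hUs : AxiallySymmetric U)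
    (g : ℍ[ℝ] → ℍ[ℝ]) (α β : ℝ × ℝ → ℍ[ℝ])
    (hslice : IsSliceHyperholomorphic U g α β)
    (hα : ContDiff ℝ 2 α) (hβ : ContDiff ℝ 2 β)
    (hg : ContDiffOn ℝ 2 g U) :
    ∀ q ∈ U,
      Lap (fun x => x * g x) q = q * Lap g q + (2 : ℝ) • CF g q ∧
      CF (fun x => x * g x) q = star q * CF g q - (2 : ℝ) • g q ∧
      CF (fun x => x * g x) q = q * CF g q - (2 : ℝ) • g (star q) ∧
      CFbar (fun x => x * g x) q =
        (4 : ℝ) • g q + (2 : ℝ) • (q * fderiv ℝ g q 1) - star q * CF g q ∧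
      CFbar (fun x => x * g x) q =
        (2 : ℝ) • g q + (2 : ℝ) • g (star q) + q * CFbar g q := by
  intro q hq
  have hg1 : DifferentiableOn ℝ g U := hg.differentiableOn (by norm_num)
  have hdiffAt : ∀ x ∈ U, DifferentiableAt ℝ g x := fun x hx =>
    hg1.differentiableAt (hUo.mem_nhds hx)
  have hgq : DifferentiableAt ℝ g q := hdiffAt q hq
  have hmr : ∀ x ∈ U, ∀ v : ℍ[ℝ], fderiv ℝ (fun y => y * g y) x v
      = v * g x + x * fderiv ℝ g x v := fun x hx v => fderiv_id_mul g x (hdiffAt x hx) v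
  have hα1 : ContDiff ℝ 1 α := hα.of_le (by norm_num)
  have hβ1 : ContDiff ℝ 1 β := hβ.of_le (by norm_num)
  -- Laplacian part
  have hfdCD : ContDiffOn ℝ 1 (fderiv ℝ g) U := hg.fderiv_of_isOpen hUo (by norm_num)
  have hde : ∀ e : ℍ[ℝ], DifferentiableAt ℝ (fun x => fderiv ℝ g x e) q := fun e =>
    ((hfdCD.differentiableOn one_ne_zero).differentiableAt (hUo.mem_nhds hq)).clm_apply
      (differentiableAt_const e)
  have key : ∀ e : ℍ[ℝ], fderiv ℝ (fun x => fderiv ℝ (fun y => y * g y) x e) q e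
      = (e * fderiv ℝ g q e + e * fderiv ℝ g q e)
        + q * fderiv ℝ (fun x => fderiv ℝ g x e) q e := by
    intro e
    have heq : (fun x => fderiv ℝ (fun y => y * g y) x e)
        =ᶠ[nhds q] (fun x => e * g x + x * fderiv ℝ g x e) := by
      filter_upwards [hUo.mem_nhds hq] with x hx
      exact hmr x hx e
    rw [Filter.EventuallyEq.fderiv_eq heq]
    have h1 := hgq.hasFDerivAt.const_mul e
    have h2 : HasFDerivAt (fun x => x * fderiv ℝ g x e)
        (q • fderiv ℝ (fun x => fderiv ℝ g x e) q
          + (ContinuousLinearMap.id ℝ ℍ[ℝ]).smulRight (fderiv ℝ g q e)) q :=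
      (hasFDerivAt_id q).mul' (hde e).hasFDerivAt
    rw [HasFDerivAt.fderiv (f := fun x => e * g x + x * fderiv ℝ g x e) (h1.add h2)]
    simp only [ContinuousLinearMap.add_apply, ContinuousLinearMap.smul_apply,
      ContinuousLinearMap.smulRight_apply, ContinuousLinearMap.id_apply, smul_eq_mul]
    abel
  have hLap : Lap (fun x => x * g x) q = q * Lap g q + (2:ℝ) • CF g q := by
    simp only [Lap, CF]
    rw [key 1, key e1, key e2, key e3]
    simp only [one_mul, mul_add, smul_add, two_smul]
    abel
  refine ⟨hLap, ?_⟩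
  by_cases him : q.im = 0
  · -- real case
    have hi : q.imI = 0 := by
      have := congrArg QuaternionAlgebra.imI him; simpa using this
    have hj : q.imJ = 0 := by
      have := congrArg QuaternionAlgebra.imJ him; simpa using this
    have hk : q.imK = 0 := by
      have := congrArg QuaternionAlgebra.imK him; simpa using this
    have hstar : star q = q := by
      ext <;> simp [hi, hj, hk]
    obtain ⟨H1, H2, H3⟩ := quatAlgReal q (g q) (fderiv ℝ g q 1) (fderiv ℝ g q e1)
      (fderiv ℝ g q e2) (fderiv ℝ g q e3) hi hj hk
    refine ⟨?_, ?_, ?_, ?_⟩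
    · simp only [CF]
      rw [hmr q hq 1, hmr q hq e1, hmr q hq e2, hmr q hq e3, hstar]
      exact H1
    · simp only [CF]
      rw [hmr q hq 1, hmr q hq e1, hmr q hq e2, hmr q hq e3, hstar]
      exact H1
    · simp only [CF, CFbar]
      rw [hmr q hq 1, hmr q hq e1, hmr q hq e2, hmr q hq e3, hstar]
      exact H2
    · simp only [CF, CFbar]
      rw [hmr q hq 1, hmr q hq e1, hmr q hq e2, hmr q hq e3, hstar]
      exact H3
  · -- non-real case
    set r : ℝ := ‖q.im‖ with hrdef
    have hr0 : r ≠ 0 := norm_ne_zero_iff.2 him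
    have hrn : r * r⁻¹ = 1 := mul_inv_cancel₀ hr0
    have hr2 : q.imI^2 + q.imJ^2 + q.imK^2 = r^2 := by
      have h1 : r^2 = normSq q.im := by
        rw [hrdef, sq, ← Quaternion.normSq_eq_norm_mul_self]
      rw [h1, Quaternion.normSq_def']
      simp
    have hmeq : q.im = (⟨0, q.imI, q.imJ, q.imK⟩ : ℍ[ℝ]) := rfl
    have hrep : ∀ x ∈ U, x.im ≠ 0 →
        g x = α (x.re, ‖x.im‖) + ‖x.im‖⁻¹ • (x.im * β (x.re, ‖x.im‖)) := by
      intro x hx hxim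
      have hxr : ‖x.im‖ ≠ 0 := norm_ne_zero_iff.2 hxim
      have hI : ((‖x.im‖⁻¹ • x.im : ℍ[ℝ])).re = 0 := by
        simp [Quaternion.re_smul]
      have hInorm : ‖(‖x.im‖⁻¹ • x.im : ℍ[ℝ])‖ = 1 := by
        rw [norm_smul, norm_inv]
        simp only [norm_norm]
        exact inv_mul_cancel₀ hxr
      have hxeq : (↑x.re : ℍ[ℝ]) + ‖x.im‖ • (‖x.im‖⁻¹ • x.im) = x := by
        rw [smul_smul, mul_inv_cancel₀ hxr, one_smul]
        exact x.re_add_im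
      have hR := hslice.rep x.re ‖x.im‖ _ hI hInorm (by rw [hxeq]; exact hx)
      rw [hxeq] at hR
      rw [hR, smul_mul_assoc]
    have hstarmem : star q ∈ U := by
      have hI : ((r⁻¹ • q.im : ℍ[ℝ])).re = 0 := by simp [Quaternion.re_smul]
      have hInorm : ‖(r⁻¹ • q.im : ℍ[ℝ])‖ = 1 := by
        rw [norm_smul, norm_inv, Real.norm_eq_abs,
          abs_of_nonneg (by rw [hrdef]; exact norm_nonneg _), ← hrdef]
        exact inv_mul_cancel₀ hr0
      have hnI : ((-(r⁻¹ • q.im) : ℍ[ℝ])).re = 0 := by simp [Quaternion.re_smul]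
      have hnInorm : ‖(-(r⁻¹ • q.im) : ℍ[ℝ])‖ = 1 := by rw [norm_neg]; exact hInorm
      have hqeq : (↑q.re : ℍ[ℝ]) + r • (r⁻¹ • q.im) = q := by
        rw [smul_smul, mul_inv_cancel₀ hr0, one_smul]
        exact q.re_add_im
      have := hUs q.re r _ _ hI hInorm hnI hnInorm (by rw [hqeq]; exact hq)
      have hsq : (↑q.re : ℍ[ℝ]) + r • -(r⁻¹ • q.im) = star q := by
        rw [smul_neg, smul_smul, mul_inv_cancel₀ hr0, one_smul]
        ext <;> simp
      rwa [hsq] at this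
    have hsim : (star q).im ≠ 0 := by
      rw [Quaternion.im_star]
      simpa using him
    have hgqe : g q = α (q.re, r) + r⁻¹ • (q.im * β (q.re, r)) := hrep q hq him
    have hgqs : g (star q) = α (q.re, r) - r⁻¹ • (q.im * β (q.re, r)) := by
      have := hrep (star q) hstarmem hsim
      rw [this, Quaternion.im_star, Quaternion.re_star, norm_neg]
      rw [show ((-q.im) * β (q.re, ‖q.im‖)) = -(q.im * β (q.re, ‖q.im‖)) from neg_mul _ _]
      rw [smul_neg, ← sub_eq_add_neg]
    have hAv : fderiv ℝ α (q.re, r) (0,1) = -fderiv ℝ β (q.re, r) (1,0) :=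
      eq_neg_of_add_eq_zero_left (hslice.CR₂ q.re r)
    have hBv : fderiv ℝ β (q.re, r) (0,1) = fderiv ℝ α (q.re, r) (1,0) :=
      (sub_eq_zero.1 (hslice.CR₁ q.re r)).symm
    have hsd := slice_deriv U hUo g α β hα1 hβ1 hrep q hq him hgq
    have ha : fderiv ℝ g q 1 = fderiv ℝ α (q.re, r) (1,0)
        + r⁻¹ • (q.im * fderiv ℝ β (q.re, r) (1,0)) := by
      rw [hsd 1]
      simp [← hrdef]
    have hb1 : fderiv ℝ g q e1 = (q.imI * r⁻¹) • (-fderiv ℝ β (q.re, r) (1,0))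
        + (-(q.imI * (r⁻¹)^3)) • (q.im * β (q.re, r)) + r⁻¹ • (e1 * β (q.re, r))
        + r⁻¹ • (q.im * ((q.imI * r⁻¹) • fderiv ℝ α (q.re, r) (1,0))) := by
      rw [hsd e1, hAv, hBv]
      simp only [e1_re, e1_imI, e1_imJ, e1_imK, e1_im, mul_one, mul_zero, add_zero,
        zero_smul, smul_zero, zero_add, smul_neg, zero_smul, neg_zero]
      match_scalars <;> rw [← hrdef] <;> field_simp <;> (try ring) <;> (try tauto)
    have hb2 : fderiv ℝ g q e2 = (q.imJ * r⁻¹) • (-fderiv ℝ β (q.re, r) (1,0))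
        + (-(q.imJ * (r⁻¹)^3)) • (q.im * β (q.re, r)) + r⁻¹ • (e2 * β (q.re, r))
        + r⁻¹ • (q.im * ((q.imJ * r⁻¹) • fderiv ℝ α (q.re, r) (1,0))) := by
      rw [hsd e2, hAv, hBv]
      simp only [e2_re, e2_imI, e2_imJ, e2_imK, e2_im, mul_one, mul_zero, add_zero,
        zero_smul, smul_zero, zero_add, smul_neg, neg_zero]
      match_scalars <;> rw [← hrdef] <;> field_simp <;> (try ring) <;> (try tauto)
    have hb3 : fderiv ℝ g q e3 = (q.imK * r⁻¹) • (-fderiv ℝ β (q.re, r) (1,0))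
        + (-(q.imK * (r⁻¹)^3)) • (q.im * β (q.re, r)) + r⁻¹ • (e3 * β (q.re, r))
        + r⁻¹ • (q.im * ((q.imK * r⁻¹) • fderiv ℝ α (q.re, r) (1,0))) := by
      rw [hsd e3, hAv, hBv]
      simp only [e3_re, e3_imI, e3_imJ, e3_imK, e3_im, mul_one, mul_zero, add_zero,
        zero_smul, smul_zero, zero_add, smul_neg, neg_zero]
      match_scalars <;> rw [← hrdef] <;> field_simp <;> (try ring) <;> (try tauto)
    obtain ⟨H2, H3, H4, H5⟩ := quatAlg q q.im r r⁻¹ (α (q.re, r)) (β (q.re, r))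
      (fderiv ℝ α (q.re, r) (1,0)) (fderiv ℝ β (q.re, r) (1,0))
      (g q) (g (star q)) (fderiv ℝ g q 1) (fderiv ℝ g q e1) (fderiv ℝ g q e2)
      (fderiv ℝ g q e3) hrn hr2 hmeq hgqe hgqs ha hb1 hb2 hb3
    refine ⟨?_, ?_, ?_, ?_⟩
    · simp only [CF]
      rw [hmr q hq 1, hmr q hq e1, hmr q hq e2, hmr q hq e3]
      exact H2
    · simp only [CF]
      rw [hmr q hq 1, hmr q hq e1, hmr q hq e2, hmr q hq e3]
      exact H3
    · simp only [CF, CFbar]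
      rw [hmr q hq 1, hmr q hq e1, hmr q hq e2, hmr q hq e3]
      exact H4
    · simp only [CF, CFbar]
      rw [hmr q hq 1, hmr q hq e1, hmr q hq e2, hmr q hq e3]
      exact H5
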